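/- arXiv:1405.6262 — 2 statements merged into one kernel-verified Lean document; each statement's English description precedes it below -/
import Mathlib

section
/- Let U be a binary random variable and W a random variable taking finitely many values w with probabilities P(w). For each w let b(w) ∈ {0,1} be chosen so that P(U = b(w) | w) ≤ 1/2. If Σ_w P(w) (1/2 − P(U = b(w) | w)) = a with a > 0, then the conditional entropy satisfies H(U | W) ≤ H(1/2 − a), where H is the binary entropy function. In particular H(U | W) is bounded away from 1 by a quantity depending only on a. -/
/-!
The binary entropy is symmetric about `1/2`, so replacing each `q w` by the minority probability
`m w = min (q w) (1 - q w)` leaves `H(U|W)` unchanged; the bias hypothesis says that the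
`P`-average of `m` is `1/2 - a`, and Jensen's inequality for the concave `H` finishes the proof.
-/

/-- The binary entropy function in bits. -/
noncomputable def binEnt2 (p : ℝ) : ℝ :=
  -(p * Real.logb 2 p) - (1 - p) * Real.logb 2 (1 - p)

lemma binEnt2_eq_inv_log_two_mul_binEntropy (p : ℝ) :
    binEnt2 p = (Real.log 2)⁻¹ * Real.binEntropy p := by
  simp only [binEnt2, Real.binEntropy, Real.logb, Real.log_inv, div_eq_inv_mul]
  ring

lemma binEnt2_one_sub (p : ℝ) : binEnt2 (1 - p) = binEnt2 p := by
  simp only [binEnt2_eq_inv_log_two_mul_binEntropy, Real.binEntropy_one_sub]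

lemma binEnt2_ite_lt_half (p : ℝ) :
    binEnt2 (if p < 1 / 2 then p else 1 - p) = binEnt2 p := by
  split_ifs
  · rfl
  · exact binEnt2_one_sub p

lemma ite_lt_half_mem_Icc {p : ℝ} (hp : p ∈ Set.Icc (0 : ℝ) 1) :
    (if p < 1 / 2 then p else 1 - p) ∈ Set.Icc (0 : ℝ) 1 := by
  obtain ⟨hp0, hp1⟩ := hp
  split_ifs <;> constructor <;> linarith

lemma concaveOn_binEnt2 : ConcaveOn ℝ (Set.Icc 0 1) binEnt2 :=
  (Real.strictConcave_binEntropy.concaveOn.smul (by positivity : (0 : ℝ) ≤ (Real.log 2)⁻¹)).congr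
    fun p _ => (binEnt2_eq_inv_log_two_mul_binEntropy p).symm

theorem condEntropy_le_of_avg_bias_general
    (W : Type) [Fintype W]
    (P : W → ℝ) (hP : ∀ w, 0 ≤ P w) (hPsum : ∑ w, P w = 1)
    (q : W → ℝ) (hq : ∀ w, q w ∈ Set.Icc (0 : ℝ) 1)  -- q w = P(U = 0 | W = w)
    (a : ℝ)
    (hbias : ∑ w, P w * (1 / 2 - (if q w < 1 / 2 then q w else 1 - q w)) = a) :
    ∑ w, P w * binEnt2 (q w) ≤ binEnt2 (1 / 2 - a) := by
  set m : W → ℝ := fun w => if q w < 1 / 2 then q w else 1 - q w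
  have hm_avg : ∑ w, P w • m w = 1 / 2 - a := by
    simp only [mul_sub, Finset.sum_sub_distrib, ← Finset.sum_mul, hPsum] at hbias
    simp only [smul_eq_mul]
    linarith
  calc ∑ w, P w * binEnt2 (q w) = ∑ w, P w • binEnt2 (m w) := by
        simp only [m, binEnt2_ite_lt_half, smul_eq_mul]
    _ ≤ binEnt2 (∑ w, P w • m w) :=
        concaveOn_binEnt2.le_map_sum (fun w _ => hP w) hPsum fun w _ => ite_lt_half_mem_Icc (hq w)
    _ = binEnt2 (1 / 2 - a) := by rw [hm_avg]

/-- If on average the conditional distribution of a binary `U` given `W` is biased away from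
uniform by `a > 0` (i.e. `Σ_w P(w)(1/2 − P(U = b(w)|w)) = a` where `b(w)` picks the less likely
value), then the conditional entropy `H(U|W) = Σ_w P(w) H(P(U=0|w))` is at most `H(1/2 − a)`. -/
theorem condEntropy_le_of_avg_bias
    (W : Type) [Fintype W]
    (P : W → ℝ) (hP : ∀ w, 0 ≤ P w) (hPsum : ∑ w, P w = 1)
    (q : W → ℝ) (hq : ∀ w, q w ∈ Set.Icc (0 : ℝ) 1)  -- q w = P(U = 0 | W = w)
    (a : ℝ) (ha : 0 < a)
    (hbias : ∑ w, P w * (1 / 2 - (if q w < 1 / 2 then q w else 1 - q w)) = a) :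
    ∑ w, P w * binEnt2 (q w) ≤ binEnt2 (1 / 2 - a) :=
  condEntropy_le_of_avg_bias_general W P hP hPsum q hq a hbias
end

section
/- Let P and Q be two probability distributions on sequences (y, u_1, ..., u_N) over a finite alphabet, which share the same marginal on y and factor as P(y, u_1^N) = P(y) ∏_{n=1}^N P(u_n | y, u_1^{n-1}) and Q(y, u_1^N) = P(y) ∏_{n=1}^N Q(u_n | y, u_1^{n-1}). Suppose Q(u_i | y, u_1^{i-1}) = P(u_i | y, u_1^{i-1}) for all i outside a set F ⊆ {1,...,N}, and for every i ∈ F, u_i is binary with Q(u_i | y, u_1^{i-1}) = 1/2, and Σ_{y, u_1^{i-1}} P(y, u_1^{i-1}) |P(U_i = 0 | y, u_1^{i-1}) − 1/2| ≤ δ. Then the total variation distance satisfies Σ_{y, u_1^N} |P(y, u_1^N) − Q(y, u_1^N)| ≤ 2Nδ. -/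
/-- Joint pmf of `(y, u_1^N)` determined by a marginal `py` on `y` and conditional kernels
`cond i y u_1^{i-1} u_i`. -/
noncomputable def cylProb {Y : Type} [Fintype Y] {N : ℕ} (py : Y → ℝ)
    (cond : (i : Fin N) → Y → (Fin (i : ℕ) → Bool) → Bool → ℝ)
    (y : Y) (u : Fin N → Bool) : ℝ :=
  py y * ∏ i, cond i y (fun j => u (Fin.castLE i.isLt.le j)) (u i)

/-- Marginal probability `P(y, u_1^{i-1})` of a prefix `pre : Fin i → Bool`. -/
noncomputable def prefProb {Y : Type} [Fintype Y] {N : ℕ} (py : Y → ℝ)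
    (cond : (i : Fin N) → Y → (Fin (i : ℕ) → Bool) → Bool → ℝ)
    (i : Fin N) (y : Y) (pre : Fin (i : ℕ) → Bool) : ℝ :=
  py y * ∏ j : Fin (i : ℕ),
    cond (Fin.castLE i.isLt.le j) y (fun k => pre (Fin.castLE j.isLt.le k)) (pre j)

open Finset

private lemma aux_prod_sub_prod (f g : ℕ → ℝ) (n : ℕ) :
    (∏ i ∈ Finset.range n, f i) - ∏ i ∈ Finset.range n, g i
      = ∑ k ∈ Finset.range n, (∏ i ∈ Finset.range k, f i) * (f k - g k) *
          ∏ i ∈ Finset.Ico (k+1) n, g i := by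
  induction n with
  | zero => simp
  | succ n ih =>
    rw [Finset.prod_range_succ, Finset.prod_range_succ, Finset.sum_range_succ]
    have h1 : ∀ k ∈ Finset.range n,
        (∏ i ∈ Finset.range k, f i) * (f k - g k) * ∏ i ∈ Finset.Ico (k+1) (n+1), g i
          = ((∏ i ∈ Finset.range k, f i) * (f k - g k) * ∏ i ∈ Finset.Ico (k+1) n, g i) * g n := by
      intro k hk
      rw [Finset.prod_Ico_succ_top (Finset.mem_range.mp hk)]
      ring
    rw [Finset.sum_congr rfl h1, ← Finset.sum_mul, ← ih]
    simp [Finset.Ico_self]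
    ring

private lemma aux_pair_sum {N : ℕ} (t : Fin N) (B G : (Fin N → Bool) → ℝ)
    (hB : ∀ u b, B (Function.update u t b) = B u)
    (hG : ∀ u, G (Function.update u t false) + G (Function.update u t true) = 1) :
    ∑ u, B u * G u = (1/2) * ∑ u, B u := by
  classical
  let e : ((Fin N → Bool) × Bool) ≃ ((Fin N → Bool) × Bool) :=
    { toFun := fun p => (Function.update p.1 t p.2, p.1 t)
      invFun := fun p => (Function.update p.1 t p.2, p.1 t)
      left_inv := by intro p; simp [Function.update_idem]
      right_inv := by intro p; simp [Function.update_idem] }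
  have key := Equiv.sum_comp e (fun p : (Fin N → Bool) × Bool => B p.1 * G p.1)
  simp only [e, Equiv.coe_fn_mk] at key
  rw [Fintype.sum_prod_type] at key
  simp only [Fintype.sum_bool, hB] at key
  have key2 : ∑ u : Fin N → Bool, B u * (G (Function.update u t true) + G (Function.update u t false))
      = ∑ p : (Fin N → Bool) × Bool, B p.1 * G p.1 := by
    rw [← key]; apply Finset.sum_congr rfl; intro u _; ring
  rw [Fintype.sum_prod_type] at key2
  simp only [Fintype.sum_bool] at key2
  have h3 : ∀ u, G (Function.update u t true) + G (Function.update u t false) = 1 := by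
    intro u; rw [add_comm]; exact hG u
  simp only [h3, mul_one] at key2
  have h4 : ∑ u : Fin N → Bool, (B u * G u + B u * G u) = 2 * ∑ u, B u * G u := by
    rw [Finset.sum_add_distrib]; ring
  rw [h4] at key2
  linarith

private lemma aux_strip {N : ℕ} (g : ℕ → (Fin N → Bool) → ℝ)
    (hgdep : ∀ n, n < N → ∀ t : Fin N, n < t.val → ∀ u b',
      g n (Function.update u t b') = g n u)
    (hgsum : ∀ n (hn : n < N) u,
      g n (Function.update u ⟨n, hn⟩ false) + g n (Function.update u ⟨n, hn⟩ true) = 1)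
    (C : (Fin N → Bool) → ℝ) (a : ℕ)
    (hC : ∀ t : Fin N, a ≤ t.val → ∀ u b', C (Function.update u t b') = C u)
    (b : ℕ) (hab : a ≤ b) (hbN : b ≤ N) :
    ∑ u, C u * ∏ i ∈ Finset.Ico a b, g i u = (1/2)^(b-a) * ∑ u, C u := by
  induction b, hab using Nat.le_induction with
  | base => simp [Finset.Ico_self]
  | succ b hab ih =>
    have hbN' : b < N := hbN
    have ihv := ih (le_of_lt hbN')
    have hstep : ∑ u, (C u * ∏ i ∈ Finset.Ico a b, g i u) * g b u
        = (1/2) * ∑ u, C u * ∏ i ∈ Finset.Ico a b, g i u := by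
      apply aux_pair_sum (⟨b, hbN'⟩ : Fin N)
      · intro u b'
        rw [hC _ (by simpa using hab) u b']
        congr 1
        apply Finset.prod_congr rfl
        intro i hi
        exact hgdep i (lt_of_lt_of_le (Finset.mem_Ico.mp hi).2 (le_of_lt hbN')) _
          (by simpa using (Finset.mem_Ico.mp hi).2) u b'
      · intro u; exact hgsum b hbN' u
    calc ∑ u, C u * ∏ i ∈ Finset.Ico a (b+1), g i u
        = ∑ u, (C u * ∏ i ∈ Finset.Ico a b, g i u) * g b u := by
          apply Finset.sum_congr rfl; intro u _
          rw [Finset.prod_Ico_succ_top hab]; ring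
      _ = (1/2) * ∑ u, C u * ∏ i ∈ Finset.Ico a b, g i u := hstep
      _ = (1/2) * ((1/2)^(b-a) * ∑ u, C u) := by rw [ihv]
      _ = (1/2)^(b+1-a) * ∑ u, C u := by
          have h : b + 1 - a = (b - a) + 1 := by omega
          rw [h, pow_succ]; ring

private lemma aux_prefix_sum {N k : ℕ} (hk : k ≤ N) (F : (Fin k → Bool) → ℝ) :
    ∑ u : Fin N → Bool, F (fun j => u (Fin.castLE hk j))
      = 2^(N-k) * ∑ p : Fin k → Bool, F p := by
  classical
  have h : k + (N - k) = N := Nat.add_sub_cancel' hk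
  let e1 : Fin N ≃ (Fin k ⊕ Fin (N - k)) := (finCongr h.symm).trans finSumFinEquiv.symm
  let E : (Fin N → Bool) ≃ ((Fin k → Bool) × (Fin (N - k) → Bool)) :=
    (Equiv.arrowCongr e1 (Equiv.refl Bool)).trans (Equiv.sumArrowEquivProdArrow _ _ Bool)
  have key : ∑ u : Fin N → Bool, F (fun j => u (Fin.castLE hk j))
      = ∑ q : (Fin k → Bool) × (Fin (N - k) → Bool), F q.1 := by
    apply Fintype.sum_equiv E
    intro u
    congr 1
  rw [key, Fintype.sum_prod_type_right]
  have hconst : ∀ y : Fin (N-k) → Bool, ∑ x : Fin k → Bool, F (x, y).1 = ∑ p, F p :=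
    fun _ => rfl
  rw [Finset.sum_congr rfl (fun y _ => hconst y), Finset.sum_const]
  simp [Finset.card_univ, Fintype.card_fun, mul_comm]

/-- extended kernel, indexed by ℕ -/
private noncomputable def extK {Y : Type} {N : ℕ}
    (cond : (i : Fin N) → Y → (Fin (i : ℕ) → Bool) → Bool → ℝ)
    (y : Y) (u : Fin N → Bool) (n : ℕ) : ℝ :=
  if h : n < N then cond ⟨n, h⟩ y (fun j => u (Fin.castLE h.le j)) (u ⟨n, h⟩) else 1

private lemma extK_lt {Y : Type} {N : ℕ}
    (cond : (i : Fin N) → Y → (Fin (i : ℕ) → Bool) → Bool → ℝ)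
    (y : Y) (u : Fin N → Bool) {n : ℕ} (h : n < N) :
    extK cond y u n = cond ⟨n, h⟩ y (fun j => u (Fin.castLE h.le j)) (u ⟨n, h⟩) :=
  dif_pos h

private lemma extK_nonneg {Y : Type} {N : ℕ}
    (cond : (i : Fin N) → Y → (Fin (i : ℕ) → Bool) → Bool → ℝ)
    (hc : ∀ i y pre b, 0 ≤ cond i y pre b) (y : Y) (u : Fin N → Bool) (n : ℕ) :
    0 ≤ extK cond y u n := by
  unfold extK
  split
  · exact hc _ _ _ _
  · exact zero_le_one

private lemma cyl_eq {Y : Type} [Fintype Y] {N : ℕ} (py : Y → ℝ)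
    (cond : (i : Fin N) → Y → (Fin (i : ℕ) → Bool) → Bool → ℝ)
    (y : Y) (u : Fin N → Bool) :
    cylProb py cond y u = py y * ∏ n ∈ Finset.range N, extK cond y u n := by
  unfold cylProb
  congr 1
  rw [← Fin.prod_univ_eq_prod_range (fun n => extK cond y u n) N]
  apply Finset.prod_congr rfl
  intro i _
  rw [extK_lt cond y u i.isLt]

private lemma extK_update_of_lt {Y : Type} {N : ℕ}
    (cond : (i : Fin N) → Y → (Fin (i : ℕ) → Bool) → Bool → ℝ)
    (y : Y) (u : Fin N → Bool) (n : ℕ) (t : Fin N) (hnt : n < t.val) (b' : Bool) :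
    extK cond y (Function.update u t b') n = extK cond y u n := by
  have hn : n < N := lt_trans hnt t.isLt
  rw [extK_lt cond _ _ hn, extK_lt cond _ _ hn]
  have hpre : (fun j : Fin n => Function.update u t b' (Fin.castLE hn.le j))
      = fun j : Fin n => u (Fin.castLE hn.le j) := by
    funext j
    exact Function.update_of_ne (Fin.ne_of_val_ne (by have := j.isLt; simp; omega)) _ _
  have hbit : Function.update u t b' ⟨n, hn⟩ = u ⟨n, hn⟩ :=
    Function.update_of_ne (Fin.ne_of_val_ne (by simp; omega)) _ _
  rw [hpre, hbit]

private lemma extK_sum_one {Y : Type} {N : ℕ}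
    (cond : (i : Fin N) → Y → (Fin (i : ℕ) → Bool) → Bool → ℝ)
    (hc1 : ∀ i y pre, cond i y pre false + cond i y pre true = 1)
    (y : Y) (u : Fin N → Bool) (n : ℕ) (hn : n < N) :
    extK cond y (Function.update u ⟨n, hn⟩ false) n
      + extK cond y (Function.update u ⟨n, hn⟩ true) n = 1 := by
  rw [extK_lt cond _ _ hn, extK_lt cond _ _ hn]
  have hpre : ∀ b' : Bool, (fun j : Fin n => Function.update u ⟨n, hn⟩ b' (Fin.castLE hn.le j))
      = fun j : Fin n => u (Fin.castLE hn.le j) := by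
    intro b'
    funext j
    exact Function.update_of_ne (Fin.ne_of_val_ne (by have := j.isLt; simp; omega)) _ _
  rw [hpre false, hpre true, Function.update_self, Function.update_self]
  exact hc1 ⟨n, hn⟩ y _

private lemma pref_eq {Y : Type} [Fintype Y] {N : ℕ} (py : Y → ℝ)
    (cond : (i : Fin N) → Y → (Fin (i : ℕ) → Bool) → Bool → ℝ)
    {k : ℕ} (hk : k < N) (y : Y) (u : Fin N → Bool) :
    prefProb py cond ⟨k, hk⟩ y (fun j => u (Fin.castLE hk.le j))
      = py y * ∏ n ∈ Finset.range k, extK cond y u n := by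
  unfold prefProb
  congr 1
  rw [← Fin.prod_univ_eq_prod_range (fun n => extK cond y u n) k]
  apply Finset.prod_congr rfl
  intro j _
  rw [extK_lt cond y u (lt_trans j.isLt hk)]
  rfl


/-- If `Q` agrees with `P` outside `F`, puts conditional probability `1/2` on the bits in `F`,
and for each `i ∈ F` the average deviation of `P(U_i = 0 | y, u_1^{i-1})` from `1/2` is at most
`δ`, then the total variation distance between `P` and `Q` is at most `2 N δ`. -/
theorem tv_le_of_polarized
    (Y : Type) [Fintype Y] (N : ℕ) (F : Finset (Fin N)) (δ : ℝ) (hδ0 : 0 ≤ δ)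
    (py : Y → ℝ) (hpy : ∀ y, 0 ≤ py y) (hpysum : ∑ y, py y = 1)
    (pcond qcond : (i : Fin N) → Y → (Fin (i : ℕ) → Bool) → Bool → ℝ)
    (hpc0 : ∀ i y pre b, 0 ≤ pcond i y pre b)
    (hpc1 : ∀ i y pre, pcond i y pre false + pcond i y pre true = 1)
    (hagree : ∀ i ∉ F, ∀ y pre b, qcond i y pre b = pcond i y pre b)
    (hhalf : ∀ i ∈ F, ∀ y pre b, qcond i y pre b = 1 / 2)
    (hdev : ∀ i ∈ F,
      ∑ y, ∑ pre : Fin (i : ℕ) → Bool,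
          prefProb py pcond i y pre * |pcond i y pre false - 1 / 2| ≤ δ) :
    ∑ y, ∑ u : Fin N → Bool,
        |cylProb py pcond y u - cylProb py qcond y u| ≤ 2 * N * δ := by
  classical
  have hq0 : ∀ i y pre b, 0 ≤ qcond i y pre b := by
    intro i y pre b
    by_cases hi : i ∈ F
    · rw [hhalf i hi]; norm_num
    · rw [hagree i hi]; exact hpc0 i y pre b
  have hqc1 : ∀ i y pre, qcond i y pre false + qcond i y pre true = 1 := by
    intro i y pre
    by_cases hi : i ∈ F
    · rw [hhalf i hi, hhalf i hi]; norm_num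
    · rw [hagree i hi, hagree i hi]; exact hpc1 i y pre
  -- the per-term bound after telescoping
  set T : Y → (Fin N → Bool) → ℕ → ℝ := fun y u k =>
    (py y * ((∏ i ∈ Finset.range k, extK pcond y u i)
        * |extK pcond y u k - extK qcond y u k|))
      * ∏ i ∈ Finset.Ico (k+1) N, extK qcond y u i with hT
  have step1 : ∀ y u, |cylProb py pcond y u - cylProb py qcond y u|
      ≤ ∑ k ∈ Finset.range N, T y u k := by
    intro y u
    rw [cyl_eq py pcond y u, cyl_eq py qcond y u, ← mul_sub, abs_mul,
      abs_of_nonneg (hpy y), aux_prod_sub_prod]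
    calc py y * |∑ k ∈ Finset.range N, (∏ i ∈ Finset.range k, extK pcond y u i)
            * (extK pcond y u k - extK qcond y u k)
            * ∏ i ∈ Finset.Ico (k+1) N, extK qcond y u i|
        ≤ py y * ∑ k ∈ Finset.range N, |(∏ i ∈ Finset.range k, extK pcond y u i)
            * (extK pcond y u k - extK qcond y u k)
            * ∏ i ∈ Finset.Ico (k+1) N, extK qcond y u i| :=
          mul_le_mul_of_nonneg_left (Finset.abs_sum_le_sum_abs _ _) (hpy y)
      _ = ∑ k ∈ Finset.range N, T y u k := by
          rw [Finset.mul_sum]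
          apply Finset.sum_congr rfl
          intro k _
          rw [abs_mul, abs_mul,
            abs_of_nonneg (Finset.prod_nonneg fun i _ => extK_nonneg pcond hpc0 y u i),
            abs_of_nonneg (Finset.prod_nonneg fun i _ => extK_nonneg qcond hq0 y u i), hT]
          ring
  have step3 : ∀ k ∈ Finset.range N, ∑ y, ∑ u, T y u k ≤ 2 * δ := by
    intro k hkmem
    have hk : k < N := Finset.mem_range.mp hkmem
    by_cases hF : (⟨k, hk⟩ : Fin N) ∈ F
    · -- the polarized case
      set Φ : Y → (Fin k → Bool) → ℝ := fun y p =>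
        prefProb py pcond ⟨k, hk⟩ y p * |pcond ⟨k, hk⟩ y p false - 1/2| with hΦ
      have habs : ∀ y u, T y u k
          = (fun u => Φ y (fun j => u (Fin.castLE hk.le j))) u
            * ∏ i ∈ Finset.Ico (k+1) N, extK qcond y u i := by
        intro y u
        rw [hT, hΦ]
        simp only []
        rw [pref_eq py pcond hk y u]
        have hdev_eq : |extK pcond y u k - extK qcond y u k|
            = |pcond ⟨k, hk⟩ y (fun j => u (Fin.castLE hk.le j)) false - 1/2| := by
          rw [extK_lt pcond _ _ hk, extK_lt qcond _ _ hk, hhalf _ hF]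
          cases hu : u ⟨k, hk⟩ with
          | false => rfl
          | true =>
              have h1 := hpc1 ⟨k, hk⟩ y (fun j => u (Fin.castLE hk.le j))
              have : pcond ⟨k, hk⟩ y (fun j => u (Fin.castLE hk.le j)) true - 1/2
                  = -(pcond ⟨k, hk⟩ y (fun j => u (Fin.castLE hk.le j)) false - 1/2) := by
                linarith
              rw [this, abs_neg]
        rw [hdev_eq]
        ring
      have hstrip : ∀ y, ∑ u : Fin N → Bool,
          (fun u => Φ y (fun j => u (Fin.castLE hk.le j))) u
            * ∏ i ∈ Finset.Ico (k+1) N, extK qcond y u i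
          = (1/2)^(N-(k+1)) * ∑ u : Fin N → Bool,
              Φ y (fun j => u (Fin.castLE hk.le j)) := by
        intro y
        apply aux_strip (fun n u => extK qcond y u n)
          (fun n hn t hnt u b' => extK_update_of_lt qcond y u n t hnt b')
          (fun n hn u => extK_sum_one qcond hqc1 y u n hn)
        intro t ht u b'
        have hpre2 : (fun j : Fin k => Function.update u t b' (Fin.castLE hk.le j))
            = fun j : Fin k => u (Fin.castLE hk.le j) := by
          funext j
          exact Function.update_of_ne (Fin.ne_of_val_ne (by have := j.isLt; simp; omega)) _ _
        show Φ y (fun j => Function.update u t b' (Fin.castLE hk.le j))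
            = Φ y (fun j => u (Fin.castLE hk.le j))
        rw [hpre2]
        exact hk
        exact le_rfl
      have hpref : ∀ y, ∑ u : Fin N → Bool, Φ y (fun j => u (Fin.castLE hk.le j))
          = 2^(N-k) * ∑ p : Fin k → Bool, Φ y p := fun y => aux_prefix_sum hk.le (Φ y)
      have hcoef : ((1:ℝ)/2)^(N-(k+1)) * 2^(N-k) = 2 := by
        have h : N - k = (N - (k+1)) + 1 := by omega
        rw [h, pow_succ]
        rw [← mul_assoc, ← mul_pow]
        norm_num
      calc ∑ y, ∑ u, T y u k
          = ∑ y, (1/2)^(N-(k+1)) * (2^(N-k) * ∑ p : Fin k → Bool, Φ y p) := by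
            apply Finset.sum_congr rfl
            intro y _
            rw [Finset.sum_congr rfl (fun u _ => habs y u), hstrip y, hpref y]
        _ = 2 * ∑ y, ∑ p : Fin k → Bool, Φ y p := by
            rw [Finset.mul_sum]
            apply Finset.sum_congr rfl
            intro y _
            rw [← mul_assoc, hcoef]
        _ ≤ 2 * δ := by
            have := hdev ⟨k, hk⟩ hF
            have h2 : (0:ℝ) ≤ 2 := by norm_num
            exact mul_le_mul_of_nonneg_left this h2
    · -- kernels agree, difference vanishes
      have hz : ∀ y u, T y u k = 0 := by
        intro y u
        rw [hT]
        simp only []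
        rw [extK_lt pcond _ _ hk, extK_lt qcond _ _ hk, hagree _ hF]
        simp
      simp only [hz]
      simp
      linarith
  calc ∑ y, ∑ u : Fin N → Bool, |cylProb py pcond y u - cylProb py qcond y u|
      ≤ ∑ y, ∑ u : Fin N → Bool, ∑ k ∈ Finset.range N, T y u k := by
        apply Finset.sum_le_sum
        intro y _
        apply Finset.sum_le_sum
        intro u _
        exact step1 y u
    _ = ∑ y, ∑ k ∈ Finset.range N, ∑ u : Fin N → Bool, T y u k :=
        Finset.sum_congr rfl (fun y _ => Finset.sum_comm)
    _ = ∑ k ∈ Finset.range N, ∑ y, ∑ u : Fin N → Bool, T y u k := Finset.sum_comm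
    _ ≤ ∑ k ∈ Finset.range N, 2 * δ := Finset.sum_le_sum step3
    _ = 2 * N * δ := by
        rw [Finset.sum_const, Finset.card_range, nsmul_eq_mul]
        ring
end
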